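/- Let Ω⊆R^n be open, g measurable with g², 1/g² ∈ L^∞(Ω), A∈S(N×n) rank-one positive with ellipticity constant ν(A)>0, and G : Ω×(R^N⊗S(n)) → R^N a Carathéodory map, Lipschitz in its second argument, with ess sup_x Lip(G(x,·)/g²(x)) < ν(A). Then the map F(x,X) := g²(x) A:X + G(x,X) satisfies the K-condition with α := g^{-2}, some β∈(0,1) and γ := (1−β)/2. -/

import Mathlib

open Finset MeasureTheory

/-- Tensors in `ℝ^N ⊗ ℝ^{n×n}` (hessian-type arguments). -/
abbrev Tens (N n : ℕ) := Fin N → Fin n → Fin n → ℝ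

/-- The contraction `A:Z ∈ ℝ^N`, `(A:Z)_α = A_{αβij} Z_{βij}`. -/
def contA {N n : ℕ} (A : Fin N → Fin N → Fin n → Fin n → ℝ) (Z : Tens N n) : Fin N → ℝ :=
  fun α => ∑ β, ∑ i, ∑ j, A α β i j * Z β i j

/-- Squared Euclidean norm on `ℝ^N`. -/
def vnorm2 {N : ℕ} (v : Fin N → ℝ) : ℝ := ∑ α, (v α) ^ 2

/-- Squared Frobenius norm on tensors. -/
def tnorm2 {N n : ℕ} (Z : Tens N n) : ℝ := ∑ α, ∑ i, ∑ j, (Z α i j) ^ 2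

/-!
The map `F(x,X) = g²(x) A:X + G(x,X)` is `g²(x)` times `A:X` plus a perturbation, so after
multiplying by `α = g⁻²` the residual `A:Z − α(F(x,X+Z) − F(x,X))` is exactly
`−g⁻²(G(x,X+Z) − G(x,X))`. The Lipschitz bound makes its square at most `L₊²|Z|²` with
`L₊ = max L 0`, and `L < ν(A)` leaves room for some `β < 1` with `L₊² ≤ βν(A)²`; the
`γ`-term is then not needed.
-/

lemma vnorm2_nonneg {N : ℕ} (v : Fin N → ℝ) : 0 ≤ vnorm2 v :=
  Finset.sum_nonneg fun _ _ => sq_nonneg _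

lemma tnorm2_nonneg {N n : ℕ} (Z : Tens N n) : 0 ≤ tnorm2 Z :=
  Finset.sum_nonneg fun _ _ => Finset.sum_nonneg fun _ _ =>
    Finset.sum_nonneg fun _ _ => sq_nonneg _

lemma vnorm2_const_mul {N : ℕ} (c : ℝ) (v : Fin N → ℝ) :
    vnorm2 (fun γ => c * v γ) = c ^ 2 * vnorm2 v := by
  simp only [vnorm2, Finset.mul_sum, mul_pow]

lemma contA_add {N n : ℕ} (A : Fin N → Fin N → Fin n → Fin n → ℝ) (X Z : Tens N n) (γ : Fin N) :
    contA A (X + Z) γ = contA A X γ + contA A Z γ := by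
  simp only [contA, Pi.add_apply, mul_add, Finset.sum_add_distrib]

lemma vnorm2_contA_sub_inv_mul_eq {N n : ℕ} (A : Fin N → Fin N → Fin n → Fin n → ℝ) {c : ℝ}
    (hc : c ≠ 0) (H : Tens N n → Fin N → ℝ) (X Z : Tens N n) :
    vnorm2 (fun γ => contA A Z γ -
        c⁻¹ * ((c * contA A (X + Z) γ + H (X + Z) γ) - (c * contA A X γ + H X γ))) =
      (c⁻¹) ^ 2 * vnorm2 (fun γ => H (X + Z) γ - H X γ) := by
  rw [← neg_sq c⁻¹, ← vnorm2_const_mul]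
  congr 1
  funext γ
  rw [contA_add]
  field_simp
  ring

lemma le_sq_mul_of_sqrt_le_mul_sqrt {a b K : ℝ} (hb : 0 ≤ b) (h : √a ≤ K * √b) :
    a ≤ K ^ 2 * b := by
  have := (Real.sqrt_le_iff.mp h).2
  rwa [mul_pow, Real.sq_sqrt hb] at this

lemma exists_lt_one_sq_le_mul_sq {L ν : ℝ} (hν : 0 < ν) (hL : L < ν) :
    ∃ β : ℝ, 0 < β ∧ β < 1 ∧ max L 0 ^ 2 ≤ β * ν ^ 2 := by
  set L' := max L 0
  have hfrac : (L' / ν) ^ 2 < 1 :=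
    (sq_lt_one_iff₀ (by positivity)).mpr ((div_lt_one hν).mpr (max_lt hL hν))
  refine ⟨((L' / ν) ^ 2 + 1) / 2, by positivity, by linarith, ?_⟩
  calc L' ^ 2 = (L' / ν) ^ 2 * ν ^ 2 := by field_simp
    _ ≤ ((L' / ν) ^ 2 + 1) / 2 * ν ^ 2 := by gcongr; linarith

theorem stmt8_general {n N : ℕ} (Ω : Set (Fin n → ℝ))
    (g : (Fin n → ℝ) → ℝ)
    (hgpos : ∀ᵐ x ∂(volume.restrict Ω), g x ≠ 0)
    (A : Fin N → Fin N → Fin n → Fin n → ℝ)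
    (ν : ℝ) (hν : 0 < ν)
    (G : (Fin n → ℝ) → Tens N n → Fin N → ℝ)
    (L : ℝ) (hL : L < ν)
    (hGLip : ∀ᵐ x ∂(volume.restrict Ω), ∀ X Y : Tens N n,
      Real.sqrt (vnorm2 (fun γ => G x Y γ - G x X γ)) ≤
        L * g x ^ 2 * Real.sqrt (tnorm2 (Y - X))) :
    ∃ be : ℝ, 0 < be ∧ be < 1 ∧ be + (1 - be) / 2 < 1 ∧
      ∀ᵐ x ∂(volume.restrict Ω), ∀ X Z : Tens N n,
        vnorm2 (fun γ => contA A Z γ -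
            (g x ^ 2)⁻¹ *
              ((g x ^ 2 * contA A (X + Z) γ + G x (X + Z) γ) -
               (g x ^ 2 * contA A X γ + G x X γ))) ≤
          be * ν ^ 2 * tnorm2 Z + ((1 - be) / 2) * vnorm2 (contA A Z) := by
  obtain ⟨be, hbe0, hbe1, hLbe⟩ := exists_lt_one_sq_le_mul_sq hν hL
  refine ⟨be, hbe0, hbe1, by linarith, ?_⟩
  filter_upwards [hgpos, hGLip] with x hgx hLipx X Z
  have hc : 0 < g x ^ 2 := by positivity
  have hlip : √(vnorm2 (fun γ => G x (X + Z) γ - G x X γ)) ≤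
      max L 0 * g x ^ 2 * √(tnorm2 Z) := by
    have h := hLipx X (X + Z)
    rw [add_sub_cancel_left] at h
    exact h.trans (by gcongr; exact le_max_left L 0)
  calc _ = (g x ^ 2)⁻¹ ^ 2 * vnorm2 (fun γ => G x (X + Z) γ - G x X γ) :=
        vnorm2_contA_sub_inv_mul_eq A hc.ne' (G x) X Z
    _ ≤ (g x ^ 2)⁻¹ ^ 2 * ((max L 0 * g x ^ 2) ^ 2 * tnorm2 Z) := by
        gcongr; exact le_sq_mul_of_sqrt_le_mul_sqrt (tnorm2_nonneg Z) hlip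
    _ = max L 0 ^ 2 * tnorm2 Z := by field_simp
    _ ≤ be * ν ^ 2 * tnorm2 Z := by gcongr; exact tnorm2_nonneg Z
    _ ≤ _ := le_add_of_nonneg_right (mul_nonneg (by linarith) (vnorm2_nonneg _))

/-- Example 1: let `g` be measurable with `g², 1/g² ∈ L^∞(Ω)`, let
`A ∈ S(N×n)` be rank-one positive with ellipticity constant `ν(A) > 0`, and let `G` be a
Carathéodory map, Lipschitz in its second argument with
`ess sup_x Lip(G(x,·)/g²(x)) < ν(A)`. Then `F(x,X) := g²(x) A:X + G(x,X)` satisfies the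
K-condition with `α := g⁻²`, some `β ∈ (0,1)` and `γ := (1−β)/2`. -/
theorem stmt8 {n N : ℕ} (Ω : Set (Fin n → ℝ)) (hΩ : IsOpen Ω)
    (g : (Fin n → ℝ) → ℝ) (hgmeas : Measurable g)
    (hg2 : MemLp (fun x => g x ^ 2) ⊤ (volume.restrict Ω))
    (hg2inv : MemLp (fun x => (g x ^ 2)⁻¹) ⊤ (volume.restrict Ω))
    (hgpos : ∀ᵐ x ∂(volume.restrict Ω), g x ≠ 0)
    (A : Fin N → Fin N → Fin n → Fin n → ℝ)
    (hsymm : ∀ α β i j, A α β i j = A β α j i) (ν : ℝ) (hν : 0 < ν)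
    (hrank1 : ∀ (η : Fin N → ℝ) (a : Fin n → ℝ),
      ∑ α, ∑ β, ∑ i, ∑ j, A α β i j * η α * a i * η β * a j ≥
        ν * (∑ α, (η α) ^ 2) * (∑ i, (a i) ^ 2))
    (G : (Fin n → ℝ) → Tens N n → Fin N → ℝ)
    (hGmeas : ∀ X : Tens N n, Measurable fun x => G x X)
    (hGcont : ∀ᵐ x ∂(volume.restrict Ω), Continuous fun X => G x X)
    (L : ℝ) (hL : L < ν)
    (hGLip : ∀ᵐ x ∂(volume.restrict Ω), ∀ X Y : Tens N n,
      Real.sqrt (vnorm2 (fun γ => G x Y γ - G x X γ)) ≤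
        L * g x ^ 2 * Real.sqrt (tnorm2 (Y - X))) :
    ∃ be : ℝ, 0 < be ∧ be < 1 ∧ be + (1 - be) / 2 < 1 ∧
      ∀ᵐ x ∂(volume.restrict Ω), ∀ X Z : Tens N n,
        vnorm2 (fun γ => contA A Z γ -
            (g x ^ 2)⁻¹ *
              ((g x ^ 2 * contA A (X + Z) γ + G x (X + Z) γ) -
               (g x ^ 2 * contA A X γ + G x X γ))) ≤
          be * ν ^ 2 * tnorm2 Z + ((1 - be) / 2) * vnorm2 (contA A Z) :=
  stmt8_general Ω g hgpos A ν hν G L hL hGLip
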